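/- arXiv:1508.04953 — 5 statements merged into one kernel-verified Lean document; each statement's English description precedes it below -/
import Mathlib

section
/- For every natural number n, the Pell numbers satisfy P_{3n} = 8·P_n^3 + 3·(-1)^n·P_n. -/
def pell : ℕ → ℤ
  | 0 => 0
  | 1 => 1
  | n + 2 => 2 * pell (n + 1) + pell n

lemma pell_cassini (n : ℕ) :
    pell (n + 1) ^ 2 - 2 * pell (n + 1) * pell n - pell n ^ 2 = (-1 : ℤ) ^ n := by
  induction n with
  | zero => simp [pell]
  | succ n ih =>
    have h : pell (n + 2) = 2 * pell (n + 1) + pell n := rfl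
    rw [h, pow_succ]
    linear_combination (-1 : ℤ) * ih

lemma pell_aux (n : ℕ) :
    pell (3 * n) = 8 * pell n ^ 3 + 3 * (-1 : ℤ) ^ n * pell n ∧
    pell (3 * n + 1) =
      pell (n + 1) ^ 3 + 3 * pell n ^ 2 * pell (n + 1) - 2 * pell n ^ 3 := by
  induction n with
  | zero => simp [pell]
  | succ n ih =>
    obtain ⟨h0, h1⟩ := ih
    have hε := pell_cassini n
    have e2 : pell (3 * n + 2) = 2 * pell (3 * n + 1) + pell (3 * n) := rfl
    have e3 : pell (3 * n + 3) = 2 * pell (3 * n + 2) + pell (3 * n + 1) := rfl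
    have e4 : pell (3 * n + 4) = 2 * pell (3 * n + 3) + pell (3 * n + 2) := rfl
    have hq : pell (n + 2) = 2 * pell (n + 1) + pell n := rfl
    constructor
    · show pell (3 * n + 3) = _
      rw [e3, e2, h0, h1, pow_succ]
      linear_combination (-3 * pell (n + 1) - 6 * pell n) * hε
    · show pell (3 * n + 4) = _
      rw [e4, e3, e2, h0, h1, hq, pow_succ]
      linear_combination (-15 * pell n) * hε

theorem pell_three_mul (n : ℕ) :
    pell (3 * n) = 8 * pell n ^ 3 + 3 * (-1 : ℤ) ^ n * pell n := by
  exact (pell_aux n).1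
end

section
/- For all natural numbers m and n, the Pell numbers satisfy P_{(2m+1)n} = Σ_{i=0}^{m} (-1)^{n(m+i)} · 2^{3i} · ((2m+1)/(2i+1)) · C(m+i, 2i) · P_n^{2i+1}, where the identity is understood as an equality of rational numbers (each coefficient ((2m+1)/(2i+1))·C(m+i,2i) is in fact an integer) and C(a,b) denotes the binomial coefficient. -/
/-!
Binet: with `u = (1 + √2) ^ n` and `v = (1 - √2) ^ n` we have `u - v = 2√2 P_n`, `u v = (-1) ^ n`
and `2√2 P_{(2m+1)n} = u ^ (2m+1) - v ^ (2m+1)`. So the theorem is the expansion of the quotient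
`(u ^ (2m+1) - v ^ (2m+1)) / (u - v)` as a polynomial in `u v` and `(u - v) ^ 2 = 8 P_n ^ 2`, an
identity valid in any commutative ring. It is proved by induction on `m` through the recurrence
`x_{m+2} = (u ^ 2 + v ^ 2) x_{m+1} - (u v) ^ 2 x_m`, where `u ^ 2 + v ^ 2 = (u - v) ^ 2 + 2 u v`.
-/

open Finset

/-- `(2m+1)/(2i+1) * C(m+i, 2i)`, in a form that is visibly a natural number. -/
def oddQuotCoeff (m i : ℕ) : ℕ :=
  (m + i).choose (2 * i) + 2 * (m + i).choose (2 * i + 1)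

lemma oddQuotCoeff_eq_zero_of_lt {m i : ℕ} (h : m < i) : oddQuotCoeff m i = 0 := by
  rw [oddQuotCoeff, Nat.choose_eq_zero_of_lt (by omega), Nat.choose_eq_zero_of_lt (by omega)]

lemma oddQuotCoeff_zero (m : ℕ) : oddQuotCoeff m 0 = 2 * m + 1 := by
  simp [oddQuotCoeff]; ring

lemma oddQuotCoeff_add_two_succ (m i : ℕ) :
    oddQuotCoeff (m + 2) (i + 1) + oddQuotCoeff m (i + 1) =
      2 * oddQuotCoeff (m + 1) (i + 1) + oddQuotCoeff (m + 1) i := by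
  simp only [oddQuotCoeff, show m + 2 + (i + 1) = m + i + 3 by omega,
    show m + 1 + (i + 1) = m + i + 2 by omega, show m + (i + 1) = m + i + 1 by omega,
    show m + 1 + i = m + i + 1 by omega, show 2 * (i + 1) = 2 * i + 2 by omega,
    Nat.choose_succ_succ']
  ring

lemma cast_oddQuotCoeff {K : Type*} [Field K] [CharZero K] (m i : ℕ) :
    (oddQuotCoeff m i : K) = (2 * m + 1) / (2 * i + 1) * (m + i).choose (2 * i) := by
  rcases lt_or_ge m i with h | h
  · rw [oddQuotCoeff_eq_zero_of_lt h, Nat.choose_eq_zero_of_lt (by omega)]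
    simp
  have key := Nat.choose_succ_right_eq (m + i) (2 * i)
  rw [show m + i - 2 * i = m - i by omega] at key
  have key' : ((m + i).choose (2 * i + 1) : K) * (2 * i + 1) = (m + i).choose (2 * i) * (m - i) := by
    exact_mod_cast key
  have hne : (2 * i + 1 : K) ≠ 0 := by exact_mod_cast (by omega : 2 * i + 1 ≠ 0)
  rw [div_mul_eq_mul_div, eq_div_iff hne]
  simp only [oddQuotCoeff, Nat.cast_add, Nat.cast_mul, Nat.cast_ofNat]
  linear_combination 2 * key'

section CommRing

variable {R : Type*} [CommRing R]

def oddQuot (m : ℕ) (p e : R) : R :=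
  ∑ i ∈ range (m + 1), (oddQuotCoeff m i : R) * p ^ (m - i) * e ^ i

@[simp, norm_cast]
lemma Int.cast_oddQuot (m : ℕ) (p e : ℤ) : ((oddQuot m p e : ℤ) : R) = oddQuot m (p : R) e := by
  simp [oddQuot]

lemma pow_mul_oddQuot (m k N : ℕ) (hN : m < N) (p e : R) :
    p ^ k * oddQuot m p e = ∑ i ∈ range N, (oddQuotCoeff m i : R) * p ^ (m + k - i) * e ^ i := by
  rw [oddQuot, mul_sum, ← sum_range_add_sum_Ico _ (show m + 1 ≤ N by omega),
    sum_eq_zero (s := Ico _ _) fun i hi => by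
      rw [oddQuotCoeff_eq_zero_of_lt (by simp at hi; omega)]; simp, add_zero]
  refine sum_congr rfl fun i hi => ?_
  rw [show m + k - i = (m - i) + k by simp at hi; omega, pow_add]
  ring

lemma oddQuot_add_two (m : ℕ) (p e : R) :
    oddQuot (m + 2) p e = (e + 2 * p) * oddQuot (m + 1) p e - p ^ 2 * oddQuot m p e := by
  have h0 := pow_mul_oddQuot (m + 2) 0 (m + 3) (by omega) p e
  have h1 := pow_mul_oddQuot (m + 1) 1 (m + 3) (by omega) p e
  have h2 := pow_mul_oddQuot m 2 (m + 3) (by omega) p e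
  rw [pow_zero, one_mul, add_zero] at h0
  rw [pow_one, show m + 1 + 1 = m + 2 from rfl] at h1
  have hsplit : ∑ i ∈ range (m + 3), ((oddQuotCoeff (m + 2) i : R) - 2 * oddQuotCoeff (m + 1) i
      + oddQuotCoeff m i) * p ^ (m + 2 - i) * e ^ i =
        oddQuot (m + 2) p e - 2 * (p * oddQuot (m + 1) p e) + p ^ 2 * oddQuot m p e := by
    rw [h0, h1, h2, mul_sum, ← sum_sub_distrib, ← sum_add_distrib]
    exact sum_congr rfl fun i _ => by ring
  have hshift : ∑ i ∈ range (m + 3), ((oddQuotCoeff (m + 2) i : R) - 2 * oddQuotCoeff (m + 1) i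
      + oddQuotCoeff m i) * p ^ (m + 2 - i) * e ^ i = e * oddQuot (m + 1) p e := by
    rw [sum_range_succ', oddQuot, mul_sum]
    simp only [oddQuotCoeff_zero]
    push_cast
    rw [show ((2 * (m + 2) + 1 : R) - 2 * (2 * (m + 1) + 1) + (2 * m + 1)) = 0 by ring,
      zero_mul, zero_mul, add_zero]
    refine sum_congr rfl fun i hi => ?_
    have hrec := congrArg (Nat.cast : ℕ → R) (oddQuotCoeff_add_two_succ m i)
    push_cast at hrec
    linear_combination p ^ (m + 1 - i) * e ^ (i + 1) * hrec
  linear_combination hshift - hsplit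

lemma sub_mul_oddQuot (u v : R) (m : ℕ) :
    (u - v) * oddQuot m (u * v) ((u - v) ^ 2) = u ^ (2 * m + 1) - v ^ (2 * m + 1) := by
  induction m using Nat.twoStepInduction with
  | zero => simp [oddQuot, oddQuotCoeff]
  | one => simp [oddQuot, sum_range_succ, oddQuotCoeff]; ring
  | more m ih₀ ih₁ =>
    rw [oddQuot_add_two]
    linear_combination ((u - v) ^ 2 + 2 * (u * v)) * ih₁ - (u * v) ^ 2 * ih₀

end CommRing

lemma pell_binet (n : ℕ) :
    2 * √2 * pell n = (1 + √2) ^ n - (1 - √2) ^ n := by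
  induction n using pell.induct with
  | case1 => simp [pell]
  | case2 => simp [pell]; ring
  | case3 n ih₁ ih₀ =>
    have h2 : √2 ^ 2 = 2 := by simp
    rw [pell, Int.cast_add, Int.cast_mul, Int.cast_ofNat]
    show _ = (1 + √2) ^ (n + 2) - (1 - √2) ^ (n + 2)
    linear_combination 2 * ih₁ + ih₀ - ((1 + √2) ^ n - (1 - √2) ^ n) * h2

lemma pell_odd_mul_eq_mul_oddQuot (m n : ℕ) :
    pell ((2 * m + 1) * n) = pell n * oddQuot m ((-1) ^ n) (8 * pell n ^ 2) := by
  have h2 : √2 ^ 2 = 2 := by simp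
  have hmul : (1 + √2) ^ n * (1 - √2) ^ n = (-1) ^ n := by
    rw [← mul_pow]; congr 1; linear_combination -h2
  have hsq : ((1 + √2) ^ n - (1 - √2) ^ n) ^ 2 = 8 * (pell n : ℝ) ^ 2 := by
    rw [← pell_binet]; linear_combination 4 * (pell n : ℝ) ^ 2 * h2
  have key := sub_mul_oddQuot ((1 + √2) ^ n) ((1 - √2) ^ n) m
  rw [hmul, hsq, ← pow_mul, ← pow_mul, mul_comm n, ← pell_binet, ← pell_binet] at key
  apply Int.cast_injective (α := ℝ)
  push_cast
  exact mul_left_cancel₀ (show 2 * √2 ≠ 0 by positivity) (by linear_combination -key)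

theorem pell_odd_mul (m n : ℕ) :
    (pell ((2 * m + 1) * n) : ℚ) =
      ∑ i ∈ Finset.range (m + 1),
        (-1 : ℚ) ^ (n * (m + i)) * 2 ^ (3 * i) * ((2 * m + 1 : ℚ) / (2 * i + 1)) *
          (Nat.choose (m + i) (2 * i) : ℚ) * (pell n : ℚ) ^ (2 * i + 1) := by
  rw [pell_odd_mul_eq_mul_oddQuot, Int.cast_mul, Int.cast_oddQuot, oddQuot, mul_sum]
  refine sum_congr rfl fun i hi => ?_
  obtain ⟨k, rfl⟩ := Nat.exists_eq_add_of_le (mem_range_succ_iff.mp hi)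
  have hsign : (-1 : ℚ) ^ (n * (i + k + i)) = ((-1) ^ n) ^ k := by
    rw [← pow_mul, show n * (i + k + i) = n * k + 2 * (n * i) by ring, pow_add, pow_mul]
    norm_num
  rw [hsign, pow_mul 2 3, Nat.add_sub_cancel_left, cast_oddQuotCoeff]
  push_cast
  ring
end

section
/- For all natural numbers m and n, the Pell numbers satisfy P_n^{2m+1} = (1/2^{3m}) · Σ_{j=0}^{m} (-1)^{j(n+1)} · C(2m+1, j) · P_{(2m+1−2j)n}, as an equality of rational numbers, where C(a,b) denotes the binomial coefficient. -/
namespace PellAux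

open Finset

def α : ℤ√2 := ⟨1, 1⟩
def β : ℤ√2 := ⟨1, -1⟩

lemma alpha_pow (k : ℕ) : α ^ k = ⟨pell (k + 1) - pell k, pell k⟩ := by
  induction k with
  | zero => ext <;> simp [pell]
  | succ k ih =>
      rw [pow_succ, ih]
      ext
      · simp only [α, Zsqrtd.re_mul, pell]; ring
      · simp only [α, Zsqrtd.im_mul, pell]; ring

lemma beta_pow (k : ℕ) : β ^ k = ⟨pell (k + 1) - pell k, -pell k⟩ := by
  induction k with
  | zero => ext <;> simp [pell]
  | succ k ih =>
      rw [pow_succ, ih]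
      ext
      · simp only [β, Zsqrtd.re_mul, pell]; ring
      · simp only [β, Zsqrtd.im_mul, pell]; ring

lemma alpha_sub_beta_pow (k : ℕ) :
    α ^ k - β ^ k = ((2 * pell k : ℤ) : ℤ√2) * Zsqrtd.sqrtd := by
  rw [alpha_pow, beta_pow]
  ext <;> simp [Zsqrtd.re_mul, Zsqrtd.im_mul] <;> ring

lemma alpha_mul_beta : α * β = -1 := by
  ext <;> simp [α, β, Zsqrtd.re_mul, Zsqrtd.im_mul]

lemma sqrtd_cancel {a b : ℤ} (h : ((a : ℤ√2)) * Zsqrtd.sqrtd = (b : ℤ√2) * Zsqrtd.sqrtd) :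
    a = b := by
  have := congrArg Zsqrtd.im h
  simpa [Zsqrtd.im_mul] using this

lemma pair (m n j : ℕ) (hj : j ≤ m) :
    (-1 : ℤ√2) ^ (j + (2 * m + 1)) * (α ^ n) ^ j * (β ^ n) ^ (2 * m + 1 - j) *
        ((2 * m + 1).choose j : ℤ√2) +
      (-1) ^ ((2 * m + 1 - j) + (2 * m + 1)) * (α ^ n) ^ (2 * m + 1 - j) *
        (β ^ n) ^ (2 * m + 1 - (2 * m + 1 - j)) * ((2 * m + 1).choose (2 * m + 1 - j) : ℤ√2) =
      ((((-1) ^ (j * (n + 1)) * ((2 * m + 1).choose j : ℤ) *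
          (2 * pell ((2 * m + 1 - 2 * j) * n))) : ℤ) : ℤ√2) * Zsqrtd.sqrtd := by
  have h1 : 2 * m + 1 - (2 * m + 1 - j) = j := by omega
  have hcs : (2 * m + 1).choose (2 * m + 1 - j) = (2 * m + 1).choose j :=
    Nat.choose_symm (by omega)
  have hs1 : (-1 : ℤ√2) ^ (j + (2 * m + 1)) = (-1) ^ j * (-1) := by
    rw [show j + (2 * m + 1) = (j + 1) + 2 * m from by omega, pow_add, pow_succ, pow_mul,
      neg_one_sq, one_pow, mul_one]
  have hs2 : (-1 : ℤ√2) ^ ((2 * m + 1 - j) + (2 * m + 1)) = (-1) ^ j := by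
    rw [show (2 * m + 1 - j) + (2 * m + 1) = j + 2 * (2 * m + 1 - j) from by omega, pow_add,
      pow_mul, neg_one_sq, one_pow, mul_one]
  rw [h1, hcs, hs1, hs2]
  rw [← pow_mul α n j, ← pow_mul β n j, ← pow_mul α n (2 * m + 1 - j),
    ← pow_mul β n (2 * m + 1 - j)]
  have e : n * (2 * m + 1 - j) = n * j + (2 * m + 1 - 2 * j) * n := by
    rw [show 2 * m + 1 - j = j + (2 * m + 1 - 2 * j) from by omega]; ring
  rw [e, pow_add, pow_add]
  have key := alpha_sub_beta_pow ((2 * m + 1 - 2 * j) * n)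
  have kab : α ^ (n * j) * β ^ (n * j) = (-1 : ℤ√2) ^ (n * j) := by
    rw [← mul_pow, alpha_mul_beta]
  have ej : j * (n + 1) = j + n * j := by ring
  push_cast [ej, pow_add] at key ⊢
  linear_combination ((-1 : ℤ√2) ^ j * ((2 * m + 1).choose j : ℤ√2) *
      (α ^ ((2 * m + 1 - 2 * j) * n) - β ^ ((2 * m + 1 - 2 * j) * n))) * kab +
    ((-1 : ℤ√2) ^ j * (-1) ^ (n * j) * ((2 * m + 1).choose j : ℤ√2)) * key

lemma int_key (m n : ℕ) :
    2 ^ (3 * m + 1) * pell n ^ (2 * m + 1) =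
      ∑ j ∈ Finset.range (m + 1),
        (-1 : ℤ) ^ (j * (n + 1)) * (Nat.choose (2 * m + 1) j : ℤ) *
          (2 * pell ((2 * m + 1 - 2 * j) * n)) := by
  have expand := sub_pow (α ^ n) (β ^ n) (2 * m + 1)
  rw [alpha_sub_beta_pow] at expand
  have sq2 : (Zsqrtd.sqrtd : ℤ√2) ^ 2 = 2 := by
    rw [sq, Zsqrtd.dmuld]; norm_num
  have lhs_eq : (((2 * pell n : ℤ) : ℤ√2) * Zsqrtd.sqrtd) ^ (2 * m + 1) =
      (((2 * pell n) ^ (2 * m + 1) * 2 ^ m : ℤ) : ℤ√2) * Zsqrtd.sqrtd := by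
    have sd : (Zsqrtd.sqrtd : ℤ√2) ^ (2 * m + 1) = 2 ^ m * Zsqrtd.sqrtd := by
      rw [pow_succ, pow_mul, sq2]
    rw [mul_pow, sd]
    push_cast; ring
  rw [lhs_eq] at expand
  have split : (∑ k ∈ Finset.range (2 * m + 1 + 1),
      (-1 : ℤ√2) ^ (k + (2 * m + 1)) * (α ^ n) ^ k * (β ^ n) ^ (2 * m + 1 - k) *
        ((2 * m + 1).choose k : ℤ√2)) =
      ((∑ j ∈ Finset.range (m + 1),
        (-1 : ℤ) ^ (j * (n + 1)) * (Nat.choose (2 * m + 1) j : ℤ) *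
          (2 * pell ((2 * m + 1 - 2 * j) * n)) : ℤ) : ℤ√2) * Zsqrtd.sqrtd := by
    set F : ℕ → ℤ√2 := fun k =>
      (-1 : ℤ√2) ^ (k + (2 * m + 1)) * (α ^ n) ^ k * (β ^ n) ^ (2 * m + 1 - k) *
        ((2 * m + 1).choose k : ℤ√2) with hF
    have h1 : (∑ k ∈ Finset.range (2 * m + 1 + 1), F k) =
        (∑ j ∈ Finset.range (m + 1), F j) + ∑ j ∈ Finset.range (m + 1), F (m + 1 + j) := by
      rw [show 2 * m + 1 + 1 = (m + 1) + (m + 1) from by omega, Finset.sum_range_add]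
    have h2 : (∑ j ∈ Finset.range (m + 1), F (m + 1 + j)) =
        ∑ j ∈ Finset.range (m + 1), F (m + 1 + (m + 1 - 1 - j)) :=
      (Finset.sum_range_reflect (fun j => F (m + 1 + j)) (m + 1)).symm
    rw [h1, h2, ← Finset.sum_add_distrib]
    rw [show ((∑ j ∈ Finset.range (m + 1),
        (-1 : ℤ) ^ (j * (n + 1)) * (Nat.choose (2 * m + 1) j : ℤ) *
          (2 * pell ((2 * m + 1 - 2 * j) * n)) : ℤ) : ℤ√2) =
        ∑ j ∈ Finset.range (m + 1),
          (((-1 : ℤ) ^ (j * (n + 1)) * (Nat.choose (2 * m + 1) j : ℤ) *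
            (2 * pell ((2 * m + 1 - 2 * j) * n)) : ℤ) : ℤ√2) from by push_cast; rfl,
      Finset.sum_mul]
    refine Finset.sum_congr rfl fun j hj => ?_
    rw [Finset.mem_range] at hj
    have hjm : j ≤ m := by omega
    have hidx : m + 1 + (m + 1 - 1 - j) = 2 * m + 1 - j := by omega
    rw [hidx, hF]
    exact pair m n j hjm
  rw [split] at expand
  have hz := sqrtd_cancel expand
  have hp : ((2 : ℤ) * pell n) ^ (2 * m + 1) * 2 ^ m = 2 ^ (3 * m + 1) * pell n ^ (2 * m + 1) := by
    rw [mul_pow, show 3 * m + 1 = (2 * m + 1) + m from by omega, pow_add]; ring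
  rw [hp] at hz
  exact hz

end PellAux

theorem pell_pow_odd (m n : ℕ) :
    (pell n : ℚ) ^ (2 * m + 1) =
      (1 / 2 ^ (3 * m)) *
        ∑ j ∈ Finset.range (m + 1),
          (-1 : ℚ) ^ (j * (n + 1)) * (Nat.choose (2 * m + 1) j : ℚ) *
            (pell ((2 * m + 1 - 2 * j) * n) : ℚ) := by
  have h := PellAux.int_key m n
  have h2 : ((2 ^ (3 * m + 1) * pell n ^ (2 * m + 1) : ℤ) : ℚ) =
      ((∑ j ∈ Finset.range (m + 1),
        (-1 : ℤ) ^ (j * (n + 1)) * (Nat.choose (2 * m + 1) j : ℤ) *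
          (2 * pell ((2 * m + 1 - 2 * j) * n)) : ℤ) : ℚ) := by exact_mod_cast h
  push_cast at h2
  have h3 : (∑ x ∈ Finset.range (m + 1), (-1:ℚ) ^ (x * (n + 1)) * ((2 * m + 1).choose x : ℚ) *
      (2 * (pell ((2 * m + 1 - 2 * x) * n) : ℚ))) =
      2 * ∑ j ∈ Finset.range (m + 1),
          (-1 : ℚ) ^ (j * (n + 1)) * (Nat.choose (2 * m + 1) j : ℚ) *
            (pell ((2 * m + 1 - 2 * j) * n) : ℚ) := by
    rw [Finset.mul_sum]
    exact Finset.sum_congr rfl fun j _ => by ring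
  rw [h3, pow_succ] at h2
  have h4 := mul_left_cancel₀ (two_ne_zero (α := ℚ)) (by linarith : (2:ℚ) *
      ((2:ℚ) ^ (3*m) * (pell n : ℚ) ^ (2*m+1)) = 2 * ∑ j ∈ Finset.range (m + 1),
          (-1 : ℚ) ^ (j * (n + 1)) * (Nat.choose (2 * m + 1) j : ℚ) *
            (pell ((2 * m + 1 - 2 * j) * n) : ℚ))
  rw [← h4, one_div, inv_mul_cancel_left₀ (by positivity)]
end

section
/- For all natural numbers m and n, the Pell and Pell-Lucas numbers satisfy Σ_{k=1}^{n} P_{2k}^{2m+1} = (1/2^{3m}) · Σ_{j=0}^{m} ((-1)^j / Q_{2m+1−2j}) · C(2m+1, j) · (P_{(2m+1−2j)(2n+1)} − P_{2m+1−2j}), as an equality of rational numbers, where C(a,b) denotes the binomial coefficient. -/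
def pellLucas : ℕ → ℤ
  | 0 => 2
  | 1 => 2
  | n + 2 => 2 * pellLucas (n + 1) + pellLucas n

namespace PellAux

open Finset Zsqrtd

def u : ℤ√2 := ⟨1, 1⟩
def v : ℤ√2 := ⟨1, -1⟩

lemma huv : u * v = -1 := by
  ext <;> simp [u, v, Zsqrtd.re_mul, Zsqrtd.im_mul]

lemma usq : u ^ 2 = 2 * u + 1 := by
  ext <;> simp [u, pow_two, Zsqrtd.re_mul, Zsqrtd.im_mul] <;> ring

lemma vsq : v ^ 2 = 2 * v + 1 := by
  ext <;> simp [v, pow_two, Zsqrtd.re_mul, Zsqrtd.im_mul] <;> ring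

lemma S : ∀ n : ℕ, u ^ n - v ^ n = ((2 * pell n : ℤ) : ℤ√2) * sqrtd := by
  intro n
  induction n using Nat.twoStepInduction with
  | zero => simp [pell]
  | one =>
    show u - v = _
    ext <;> simp [u, v, pell, Zsqrtd.re_mul, Zsqrtd.im_mul]
  | more n ih1 ih2 =>
    have hu : u ^ (n + 2) = 2 * u ^ (n + 1) + u ^ n := by
      have : u ^ (n + 2) = u ^ n * u ^ 2 := by ring
      rw [this, usq]; ring
    have hv : v ^ (n + 2) = 2 * v ^ (n + 1) + v ^ n := by
      have : v ^ (n + 2) = v ^ n * v ^ 2 := by ring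
      rw [this, vsq]; ring
    rw [hu, hv]
    have hp : pell (n + 2) = 2 * pell (n + 1) + pell n := rfl
    rw [show (2 * u ^ (n + 1) + u ^ n) - (2 * v ^ (n + 1) + v ^ n)
        = 2 * (u ^ (n + 1) - v ^ (n + 1)) + (u ^ n - v ^ n) by ring,
      ih2, ih1, hp]
    push_cast
    ring

lemma A : ∀ n : ℕ, u ^ n + v ^ n = ((pellLucas n : ℤ) : ℤ√2) := by
  intro n
  induction n using Nat.twoStepInduction with
  | zero =>
    show (1 : ℤ√2) + 1 = _
    have : pellLucas 0 = 2 := rfl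
    rw [this]; push_cast; ring
  | one =>
    show u + v = _
    have : pellLucas 1 = 2 := rfl
    rw [this]
    ext <;> simp [u, v]
  | more n ih1 ih2 =>
    have hu : u ^ (n + 2) = 2 * u ^ (n + 1) + u ^ n := by
      have : u ^ (n + 2) = u ^ n * u ^ 2 := by ring
      rw [this, usq]; ring
    have hv : v ^ (n + 2) = 2 * v ^ (n + 1) + v ^ n := by
      have : v ^ (n + 2) = v ^ n * v ^ 2 := by ring
      rw [this, vsq]; ring
    have hp : pellLucas (n + 2) = 2 * pellLucas (n + 1) + pellLucas n := rfl
    rw [hu, hv, show (2 * u ^ (n + 1) + u ^ n) + (2 * v ^ (n + 1) + v ^ n)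
        = 2 * (u ^ (n + 1) + v ^ (n + 1)) + (u ^ n + v ^ n) by ring,
      ih2, ih1, hp]
    push_cast
    ring

lemma cancel {a b : ℤ} (h : ((a : ℤ√2)) * sqrtd = (b : ℤ√2) * sqrtd) : a = b := by
  have := congrArg Zsqrtd.im h
  simpa [Zsqrtd.im_mul] using this

lemma pellLucas_pos : ∀ n, 0 < pellLucas n := by
  intro n
  induction n using Nat.twoStepInduction with
  | zero => norm_num [show pellLucas 0 = 2 from rfl]
  | one => norm_num [show pellLucas 1 = 2 from rfl]
  | more n ih1 ih2 =>
    have hp : pellLucas (n + 2) = 2 * pellLucas (n + 1) + pellLucas n := rfl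
    rw [hp]; positivity

lemma B (m k : ℕ) :
    (2 : ℤ) ^ (3 * m) * pell (2 * k) ^ (2 * m + 1) =
      ∑ j ∈ range (m + 1), (-1) ^ j * ((2 * m + 1).choose j : ℤ) *
        pell ((2 * m + 1 - 2 * j) * (2 * k)) := by
  set x : ℤ√2 := u ^ (2 * k) with hx
  set y : ℤ√2 := v ^ (2 * k) with hy
  have hxy : x * y = 1 := by
    rw [hx, hy, ← mul_pow, huv, pow_mul]; norm_num
  have hxyj : ∀ j : ℕ, x ^ j * y ^ j = 1 := by
    intro j; rw [← mul_pow, hxy, one_pow]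
  have neg1sq : ∀ a : ℕ, ((-1 : ℤ√2)) ^ (2 * a) = 1 := by
    intro a; rw [pow_mul]; norm_num
  -- the Zsqrtd identity
  have key : (x - y) ^ (2 * m + 1) =
      ∑ j ∈ range (m + 1), (-1 : ℤ√2) ^ j * ((2 * m + 1).choose j : ℤ√2) *
        (x ^ (2 * m + 1 - 2 * j) - y ^ (2 * m + 1 - 2 * j)) := by
    rw [sub_pow]
    have hsplit : (2 * m + 1) + 1 = (m + 1) + (m + 1) := by omega
    rw [hsplit, Finset.sum_range_add]
    rw [← Finset.sum_range_reflect (fun i => (-1 : ℤ√2) ^ (m + 1 + i + (2 * m + 1)) *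
        x ^ (m + 1 + i) * y ^ (2 * m + 1 - (m + 1 + i)) * ((2 * m + 1).choose (m + 1 + i) : ℤ√2))]
    rw [← Finset.sum_add_distrib]
    refine Finset.sum_congr rfl ?_
    intro j hj
    have hjm : j ≤ m := Nat.lt_succ_iff.mp (Finset.mem_range.mp hj)
    have e1 : m + 1 + (m + 1 - 1 - j) = 2 * m + 1 - j := by omega
    rw [e1]
    have e2 : 2 * m + 1 - (2 * m + 1 - j) = j := by omega
    have e4 : (2 * m + 1).choose (2 * m + 1 - j) = (2 * m + 1).choose j := by
      rw [Nat.choose_symm (by omega)]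
    rw [e2, e4]
    have e3 : 2 * m + 1 - j = (2 * m + 1 - 2 * j) + j := by omega
    rw [e3]
    have hs1 : (-1 : ℤ√2) ^ (j + (2 * m + 1)) = (-1) ^ j * (-1) := by
      rw [show j + (2 * m + 1) = 2 * m + (j + 1) by omega, pow_add, neg1sq, one_mul, pow_succ]
    have hs2 : (-1 : ℤ√2) ^ ((2 * m + 1 - 2 * j) + j + (2 * m + 1)) = (-1) ^ j := by
      rw [show (2 * m + 1 - 2 * j) + j + (2 * m + 1) = 2 * (2 * m + 1 - j) + j by omega,
        pow_add, neg1sq, one_mul]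
    rw [hs1, hs2, pow_add, pow_add]
    linear_combination ((-1 : ℤ√2) ^ j * ((2 * m + 1).choose j : ℤ√2) *
      (x ^ (2 * m + 1 - 2 * j) - y ^ (2 * m + 1 - 2 * j))) * hxyj j
  -- convert to ℤ
  have sq2 : (sqrtd : ℤ√2) ^ (2 * m + 1) = (((2 : ℤ) ^ m : ℤ) : ℤ√2) * sqrtd := by
    rw [pow_succ, pow_mul, pow_two, dmuld]
    push_cast
    ring
  have main : ((2 * ((2 : ℤ) ^ (3 * m) * pell (2 * k) ^ (2 * m + 1)) : ℤ) : ℤ√2) * sqrtd =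
      ((2 * ∑ j ∈ range (m + 1), (-1) ^ j * ((2 * m + 1).choose j : ℤ) *
        pell ((2 * m + 1 - 2 * j) * (2 * k)) : ℤ) : ℤ√2) * sqrtd := by
    calc ((2 * ((2 : ℤ) ^ (3 * m) * pell (2 * k) ^ (2 * m + 1)) : ℤ) : ℤ√2) * sqrtd
        = ((2 * pell (2 * k) : ℤ) : ℤ√2) ^ (2 * m + 1) * sqrtd ^ (2 * m + 1) := by
          rw [sq2]
          push_cast
          ring
      _ = (x - y) ^ (2 * m + 1) := by rw [hx, hy, S, mul_pow]
      _ = ∑ j ∈ range (m + 1), (-1 : ℤ√2) ^ j * ((2 * m + 1).choose j : ℤ√2) *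
            (x ^ (2 * m + 1 - 2 * j) - y ^ (2 * m + 1 - 2 * j)) := key
      _ = ((2 * ∑ j ∈ range (m + 1), (-1) ^ j * ((2 * m + 1).choose j : ℤ) *
            pell ((2 * m + 1 - 2 * j) * (2 * k)) : ℤ) : ℤ√2) * sqrtd := by
          push_cast
          rw [Finset.mul_sum, Finset.sum_mul]
          refine Finset.sum_congr rfl ?_
          intro j hj
          rw [hx, hy, ← pow_mul, ← pow_mul, mul_comm (2 * k) (2 * m + 1 - 2 * j), S]
          push_cast
          ring
  have := cancel main
  omega
lemma step (d c : ℕ) (hd : Odd d) :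
    pellLucas d * pell (d * (2 * c + 2)) =
      pell (d * (2 * c + 3)) - pell (d * (2 * c + 1)) := by
  set a : ℤ√2 := u ^ d with ha
  set b : ℤ√2 := v ^ d with hb
  have hab : a * b = -1 := by
    rw [ha, hb, ← mul_pow, huv, hd.neg_one_pow]
  have key : (a + b) * (a ^ (2 * c + 2) - b ^ (2 * c + 2)) =
      (a ^ (2 * c + 3) - b ^ (2 * c + 3)) - (a ^ (2 * c + 1) - b ^ (2 * c + 1)) := by
    linear_combination (a ^ (2 * c + 1) - b ^ (2 * c + 1)) * hab
  rw [ha, hb, ← pow_mul, ← pow_mul, ← pow_mul, ← pow_mul, ← pow_mul, ← pow_mul] at key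
  rw [A, S, S, S] at key
  have main : ((2 * (pellLucas d * pell (d * (2 * c + 2))) : ℤ) : ℤ√2) * sqrtd =
      ((2 * (pell (d * (2 * c + 3)) - pell (d * (2 * c + 1))) : ℤ) : ℤ√2) * sqrtd := by
    push_cast at key ⊢
    linear_combination key
  have := cancel main
  omega

lemma T (d n : ℕ) (hd : Odd d) :
    pellLucas d * ∑ k ∈ Icc 1 n, pell (d * (2 * k)) =
      pell (d * (2 * n + 1)) - pell d := by
  induction n with
  | zero => simp
  | succ n ih =>
    rw [Finset.sum_Icc_succ_top (by omega), mul_add, ih]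
    have h1 : 2 * (n + 1) = 2 * n + 2 := by omega
    have h2 : 2 * n + 2 + 1 = 2 * n + 3 := by omega
    rw [h1, h2, step d n hd]
    ring
end PellAux

open PellAux in
theorem pell_sum_pow_odd (m n : ℕ) :
    (∑ k ∈ Finset.Icc 1 n, (pell (2 * k) : ℚ) ^ (2 * m + 1)) =
      (1 / 2 ^ (3 * m)) *
        ∑ j ∈ Finset.range (m + 1),
          ((-1 : ℚ) ^ j / (pellLucas (2 * m + 1 - 2 * j) : ℚ)) *
            (Nat.choose (2 * m + 1) j : ℚ) *
            ((pell ((2 * m + 1 - 2 * j) * (2 * n + 1)) : ℚ) - (pell (2 * m + 1 - 2 * j) : ℚ)) := by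
  have hQ : ∀ i : ℕ, (pellLucas i : ℚ) ≠ 0 := by
    intro i
    have := pellLucas_pos i
    exact_mod_cast this.ne'
  have hterm : ∀ j ∈ Finset.range (m + 1),
      ((-1 : ℚ) ^ j / (pellLucas (2 * m + 1 - 2 * j) : ℚ)) *
        (Nat.choose (2 * m + 1) j : ℚ) *
        ((pell ((2 * m + 1 - 2 * j) * (2 * n + 1)) : ℚ) - (pell (2 * m + 1 - 2 * j) : ℚ)) =
      (-1 : ℚ) ^ j * (Nat.choose (2 * m + 1) j : ℚ) *
        ∑ k ∈ Finset.Icc 1 n, (pell ((2 * m + 1 - 2 * j) * (2 * k)) : ℚ) := by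
    intro j hj
    have hjm : j ≤ m := Nat.lt_succ_iff.mp (Finset.mem_range.mp hj)
    have hd : Odd (2 * m + 1 - 2 * j) := ⟨m - j, by omega⟩
    have hT := T (2 * m + 1 - 2 * j) n hd
    have hTq : (pell ((2 * m + 1 - 2 * j) * (2 * n + 1)) : ℚ) - (pell (2 * m + 1 - 2 * j) : ℚ) =
        (pellLucas (2 * m + 1 - 2 * j) : ℚ) *
          ∑ k ∈ Finset.Icc 1 n, (pell ((2 * m + 1 - 2 * j) * (2 * k)) : ℚ) := by
      exact_mod_cast congrArg (fun z : ℤ => (z : ℚ)) hT.symm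
    rw [hTq, div_mul_eq_mul_div, div_mul_eq_mul_div, div_eq_iff (hQ _)]
    ring
  have hB : ∀ k : ℕ,
      (∑ j ∈ Finset.range (m + 1), (-1 : ℚ) ^ j * (Nat.choose (2 * m + 1) j : ℚ) *
        (pell ((2 * m + 1 - 2 * j) * (2 * k)) : ℚ)) =
      2 ^ (3 * m) * (pell (2 * k) : ℚ) ^ (2 * m + 1) := by
    intro k
    exact_mod_cast congrArg (fun z : ℤ => (z : ℚ)) (B m k).symm
  have swap : (∑ j ∈ Finset.range (m + 1), (-1 : ℚ) ^ j * (Nat.choose (2 * m + 1) j : ℚ) *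
        ∑ k ∈ Finset.Icc 1 n, (pell ((2 * m + 1 - 2 * j) * (2 * k)) : ℚ)) =
      ∑ k ∈ Finset.Icc 1 n, 2 ^ (3 * m) * (pell (2 * k) : ℚ) ^ (2 * m + 1) := by
    simp_rw [Finset.mul_sum]
    rw [Finset.sum_comm]
    exact Finset.sum_congr rfl (fun k _ => hB k)
  rw [Finset.sum_congr rfl hterm, swap, Finset.mul_sum]
  refine Finset.sum_congr rfl ?_
  intro k _
  rw [← mul_assoc, one_div, inv_mul_cancel₀ (by positivity), one_mul]
end

section
/- For every natural number n, the Pell and Pell-Lucas numbers satisfy Q_1 · Q_3 · Σ_{k=1}^{n} P_{2k}^3 = 2·P_{2n+1}^3 − 6·P_{2n+1} + 4. -/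
lemma pell_id (n : ℕ) :
    pell (n + 1) ^ 2 - 2 * pell (n + 1) * pell n - pell n ^ 2 = (-1) ^ n := by
  induction n with
  | zero => simp [pell]
  | succ m ih =>
    rw [show m + 1 + 1 = m + 2 from rfl, pell, pow_succ]
    ring_nf
    ring_nf at ih
    linarith

theorem melham_cube (n : ℕ) :
    pellLucas 1 * pellLucas 3 * ∑ k ∈ Finset.Icc 1 n, pell (2 * k) ^ 3 =
      2 * pell (2 * n + 1) ^ 3 - 6 * pell (2 * n + 1) + 4 := by
  induction n with
  | zero => simp [pell, pellLucas]
  | succ m ih =>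
    rw [Finset.sum_Icc_succ_top (by omega : 1 ≤ m + 1), mul_add, ih]
    have h := pell_id (2 * m + 1)
    rw [show (-1 : ℤ) ^ (2 * m + 1) = -1 by simp [pow_succ, pow_mul]] at h
    have e1 : 2 * (m + 1) + 1 = (2 * m + 1) + 2 := by ring
    have e2 : 2 * (m + 1) = (2 * m) + 2 := by ring
    rw [e1, e2, pell, pell]
    have : pell (2 * m + 1 + 1) = 2 * pell (2 * m + 1) + pell (2 * m) := rfl
    rw [this] at h ⊢
    have hq : pellLucas 1 * pellLucas 3 = 28 := by norm_num [pellLucas]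
    rw [hq]
    linear_combination 12 * (2 * pell (2 * m + 1) + pell (2 * m)) * h
end
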